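/- For m ∈ ℕ, the sum satisfies 2 ∑_{j=1}^{m} 1/((2j)² sqrt((2m+1)² - (2j)²)) ≤ 2 sqrt(m² + m)/(2m+1)², which is at most 1/(2m+1). -/

import Mathlib

/-!
Writing `t = N sin θ`, the function `chordCot N t = √(N² - t²) / t` is `cot θ`, and
`d/dt chordCot N t = -N² / (t² √(N² - t²))`. Since `t ↦ 1 / (t² √(N² - t²))` is convex, its value
at `t` is at most its mean over `[t - 1, t + 1]`, i.e. at most
`(chordCot N (t - 1) - chordCot N (t + 1)) / (2 N²)`; we prove this midpoint inequality
algebraically. Applied at `t = 2, 4, …, 2m` with `N = 2m + 1` the bounds telescope to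
`chordCot N 1 / (2 N²) = √(m² + m) / N²`, as `chordCot N N = 0`.
-/

open Real Finset

noncomputable def chordCot (N t : ℝ) : ℝ := √(N ^ 2 - t ^ 2) / t

lemma chordCot_self (N : ℝ) : chordCot N N = 0 := by
  simp [chordCot]

lemma mul_sq_sub_one_sq_le {c D : ℝ} (hc : 1 < c) (hD : 0 ≤ D) :
    (D - 1) * (c ^ 2 + 1) * (c ^ 2 - 1) ^ 2 ≤ c ^ 6 * D := by
  nlinarith [mul_nonneg hD (show 0 ≤ c ^ 4 + c ^ 2 - 1 by nlinarith),
    mul_nonneg (sq_nonneg (c ^ 2 - 1)) (show (0 : ℝ) ≤ c ^ 2 + 1 by positivity)]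

lemma one_div_sq_mul_sqrt_le_chordCot_sub {N c : ℝ} (hc : 1 < c) (hcN : c + 1 ≤ N) :
    1 / (c ^ 2 * √(N ^ 2 - c ^ 2)) ≤ (chordCot N (c - 1) - chordCot N (c + 1)) / (2 * N ^ 2) := by
  have hN : 0 < N := by linarith
  have hw2 : √(N ^ 2 - c ^ 2) ^ 2 = N ^ 2 - c ^ 2 := sq_sqrt (by nlinarith)
  have hu2 : √(N ^ 2 - (c - 1) ^ 2) ^ 2 = N ^ 2 - (c - 1) ^ 2 := sq_sqrt (by nlinarith)
  have hv2 : √(N ^ 2 - (c + 1) ^ 2) ^ 2 = N ^ 2 - (c + 1) ^ 2 := sq_sqrt (by nlinarith)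
  set w := √(N ^ 2 - c ^ 2)
  set u := √(N ^ 2 - (c - 1) ^ 2)
  set v := √(N ^ 2 - (c + 1) ^ 2)
  have hw : 0 < w := sqrt_pos.mpr (by nlinarith)
  have hu : 0 < u := sqrt_pos.mpr (by nlinarith)
  have hv : 0 ≤ v := sqrt_nonneg _
  have hc2 : 0 < c ^ 2 - 1 := by nlinarith
  set P := u * (c + 1) + v * (c - 1)
  have hP : 0 < P := by positivity
  have hchain : (c ^ 2 - 1) * P ≤ 2 * c ^ 3 * w := by
    rw [← pow_le_pow_iff_left₀ (by positivity) (by positivity) two_ne_zero]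
    calc ((c ^ 2 - 1) * P) ^ 2 = (c ^ 2 - 1) ^ 2 * P ^ 2 := by ring
      _ ≤ (c ^ 2 - 1) ^ 2 * (4 * ((N ^ 2 - c ^ 2 - 1) * (c ^ 2 + 1))) := by
        gcongr
        -- Cauchy–Schwarz: `P² ≤ (u² + v²) ((c + 1)² + (c - 1)²)`
        nlinarith [sq_nonneg (u * (c - 1) - v * (c + 1))]
      _ ≤ 4 * (c ^ 6 * (N ^ 2 - c ^ 2)) := by
        nlinarith [mul_sq_sub_one_sq_le hc (show 0 ≤ N ^ 2 - c ^ 2 by nlinarith)]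
      _ = (2 * c ^ 3 * w) ^ 2 := by rw [mul_pow, hw2]; ring
  -- rationalise with `(u (c + 1) - v (c - 1)) P = 4 c N²`
  have hdiff : chordCot N (c - 1) - chordCot N (c + 1) = 4 * c * N ^ 2 / ((c ^ 2 - 1) * P) := by
    rw [chordCot, chordCot, div_sub_div _ _ (by linarith) (by linarith), div_eq_div_iff
      (by nlinarith) (by positivity)]
    linear_combination (c ^ 2 - 1) * ((c + 1) ^ 2 * hu2 - (c - 1) ^ 2 * hv2)
  rw [hdiff, div_div, div_le_div_iff₀ (by positivity) (by positivity)]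
  have := mul_le_mul_of_nonneg_left hchain (by positivity : (0 : ℝ) ≤ 2 * N ^ 2)
  linarith

lemma sum_one_div_sq_mul_sqrt_le (N : ℝ) {n : ℕ} (hn : 2 * (n : ℝ) + 1 ≤ N) :
    ∑ j ∈ Icc 1 n, 1 / ((2 * (j : ℝ)) ^ 2 * √(N ^ 2 - (2 * (j : ℝ)) ^ 2)) ≤
      (chordCot N 1 - chordCot N (2 * n + 1)) / (2 * N ^ 2) := by
  induction n with
  | zero => simp
  | succ n ih =>
    push_cast at hn ⊢
    rw [sum_Icc_succ_top (by omega)]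
    have step := one_div_sq_mul_sqrt_le_chordCot_sub (N := N) (c := 2 * ((n : ℝ) + 1))
      (by linarith [n.cast_nonneg (α := ℝ)]) (by linarith)
    rw [show 2 * ((n : ℝ) + 1) - 1 = 2 * n + 1 by ring,
      show 2 * ((n : ℝ) + 1) + 1 = 2 * (n + 1) + 1 by ring] at step
    have := ih (by linarith)
    rw [sub_div] at this step ⊢
    push_cast
    linarith

lemma two_mul_sqrt_sq_add_le {x : ℝ} (hx : 0 ≤ x) : 2 * √(x ^ 2 + x) ≤ 2 * x + 1 := by
  rw [← le_div_iff₀' two_pos, sqrt_le_iff]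
  constructor <;> nlinarith

theorem even_sum_estimate (m : ℕ) :
    2 * ∑ j ∈ Finset.Icc 1 m,
        1 / ((2 * (j : ℝ)) ^ 2 * Real.sqrt ((2 * (m : ℝ) + 1) ^ 2 - (2 * (j : ℝ)) ^ 2)) ≤
      2 * Real.sqrt ((m : ℝ) ^ 2 + m) / (2 * (m : ℝ) + 1) ^ 2 ∧
    2 * Real.sqrt ((m : ℝ) ^ 2 + m) / (2 * (m : ℝ) + 1) ^ 2 ≤ 1 / (2 * (m : ℝ) + 1) := by
  have hN : 0 < 2 * (m : ℝ) + 1 := by positivity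
  have hcot : chordCot (2 * m + 1) 1 = 2 * √((m : ℝ) ^ 2 + m) := by
    rw [chordCot, div_one, show (2 * (m : ℝ) + 1) ^ 2 - 1 ^ 2 = 2 ^ 2 * (m ^ 2 + m) by ring,
      sqrt_mul (by positivity), sqrt_sq two_pos.le]
  constructor
  · have := sum_one_div_sq_mul_sqrt_le (2 * m + 1) (n := m) le_rfl
    rw [chordCot_self, hcot] at this
    calc _ ≤ 2 * ((2 * √((m : ℝ) ^ 2 + m) - 0) / (2 * (2 * m + 1) ^ 2)) := by gcongr
      _ = _ := by field_simp; ring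
  · rw [div_le_div_iff₀ (by positivity) hN]
    nlinarith [two_mul_sqrt_sq_add_le (Nat.cast_nonneg (α := ℝ) m)]
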